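/- arXiv:2511.18944 — 8 statements merged into one kernel-verified Lean document; each statement's English description precedes it below -/
import Mathlib

section
/- Let φ : ℕ → ℝ be completely multiplicative (φ(m·n) = φ(m)·φ(n) for all m,n), non-decreasing, with φ(1) = 1 and φ(n) > 0 for all n ≥ 1. Then there exists a real number α ≥ 0 such that φ(n) = n^α for all n ≥ 1. -/
/-- Erdős (1946): a monotone, completely multiplicative, positive arithmetic
function is a power function. -/
theorem erdos_multiplicative_power (φ : ℕ → ℝ)
    (hmul : ∀ m n : ℕ, φ (m * n) = φ m * φ n)
    (hmono : Monotone φ)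
    (hone : φ 1 = 1)
    (hpos : ∀ n : ℕ, 1 ≤ n → 0 < φ n) :
    ∃ α : ℝ, 0 ≤ α ∧ ∀ n : ℕ, 1 ≤ n → φ n = (n : ℝ) ^ α := by
  have h1 : ∀ n : ℕ, 1 ≤ n → 1 ≤ φ n := fun n hn => hone ▸ hmono hn
  have hpow : ∀ n k : ℕ, φ (n ^ k) = φ n ^ k := by
    intro n k
    induction k with
    | zero => simpa using hone
    | succ k ih => rw [pow_succ, hmul, ih, pow_succ]
  have key : ∀ m n : ℕ, 2 ≤ m → 2 ≤ n →
      Real.log (φ m) * Real.log n = Real.log (φ n) * Real.log m := by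
    intro m n hm hn
    set a := Real.log (φ m) with ha
    set b := Real.log (φ n) with hb
    have hb0 : 0 ≤ b := Real.log_nonneg (h1 n (by omega))
    have hlogn : (0:ℝ) < Real.log n := Real.log_pos (by exact_mod_cast hn)
    have hlogm : (0:ℝ) < Real.log m := Real.log_pos (by exact_mod_cast hm)
    have bound : ∀ k : ℕ, 1 ≤ k →
        |a * Real.log n - b * Real.log m| ≤ b * Real.log n / k := by
      intro k hk
      set l := Nat.log n (m ^ k) with hl
      have hml : n ^ l ≤ m ^ k := Nat.pow_log_le_self n (by positivity)
      have hml' : m ^ k < n ^ (l + 1) := Nat.lt_pow_succ_log_self (by omega) _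
      have h2 : φ (n ^ l) ≤ φ (m ^ k) := hmono hml
      have h3 : φ (m ^ k) ≤ φ (n ^ (l + 1)) := hmono (le_of_lt hml')
      rw [hpow, hpow] at h2
      rw [hpow, hpow] at h3
      have e2 : (l:ℝ) * b ≤ (k:ℝ) * a := by
        have := Real.log_le_log (pow_pos (hpos n (by omega)) l) h2
        rw [Real.log_pow, Real.log_pow] at this
        push_cast at this ⊢
        linarith
      have e3 : (k:ℝ) * a ≤ ((l:ℝ) + 1) * b := by
        have := Real.log_le_log (pow_pos (hpos m (by omega)) k) h3
        rw [Real.log_pow, Real.log_pow] at this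
        push_cast at this ⊢
        linarith
      have e4 : (l:ℝ) * Real.log n ≤ (k:ℝ) * Real.log m := by
        have h' : ((n:ℝ)) ^ l ≤ (m:ℝ) ^ k := by exact_mod_cast hml
        have := Real.log_le_log (pow_pos (by exact_mod_cast (by omega : 0 < n) : (0:ℝ) < (n:ℝ)) _) h'
        rw [Real.log_pow, Real.log_pow] at this
        push_cast at this ⊢
        linarith
      have e5 : (k:ℝ) * Real.log m ≤ ((l:ℝ) + 1) * Real.log n := by
        have h' : ((m:ℝ)) ^ k ≤ (n:ℝ) ^ (l + 1) := by exact_mod_cast hml'.le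
        have := Real.log_le_log (pow_pos (by exact_mod_cast (by omega : 0 < m) : (0:ℝ) < (m:ℝ)) _) h'
        rw [Real.log_pow, Real.log_pow] at this
        push_cast at this ⊢
        linarith
      have hk' : (0:ℝ) < (k:ℝ) := by exact_mod_cast hk
      rw [le_div_iff₀ hk']
      have habs : |a * Real.log n - b * Real.log m| * (k:ℝ)
          = |(k:ℝ) * (a * Real.log n - b * Real.log m)| := by
        rw [abs_mul, abs_of_pos hk', mul_comm]
      rw [habs, abs_le]
      constructor
      · nlinarith [mul_le_mul_of_nonneg_right e2 hlogn.le,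
          mul_le_mul_of_nonneg_left e5 hb0]
      · nlinarith [mul_le_mul_of_nonneg_right e3 hlogn.le,
          mul_le_mul_of_nonneg_left e4 hb0]
    have hzero : a * Real.log n - b * Real.log m = 0 := by
      by_contra hne
      have hxpos : 0 < |a * Real.log n - b * Real.log m| := abs_pos.mpr hne
      obtain ⟨k, hk⟩ := exists_nat_gt (b * Real.log n / |a * Real.log n - b * Real.log m|)
      have hk1 : 1 ≤ k := by
        by_contra h
        push_neg at h
        interval_cases k
        · have : 0 ≤ b * Real.log n / |a * Real.log n - b * Real.log m| := by positivity
          simp at hk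
          linarith
      have hble := bound k hk1
      have hk' : (0:ℝ) < (k:ℝ) := by exact_mod_cast hk1
      rw [div_lt_iff₀ hxpos] at hk
      rw [le_div_iff₀ hk'] at hble
      nlinarith
    linarith
  refine ⟨Real.log (φ 2) / Real.log 2, ?_, ?_⟩
  · have hl2 : (0:ℝ) < Real.log 2 := Real.log_pos (by norm_num)
    have : 0 ≤ Real.log (φ 2) := Real.log_nonneg (h1 2 (by norm_num))
    positivity
  · intro n hn
    rcases eq_or_lt_of_le hn with h | h
    · rw [← h]
      simp [hone]
    · have hn2 : 2 ≤ n := h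
      have hk := key n 2 hn2 (by norm_num)
      have hl2 : (0:ℝ) < Real.log 2 := Real.log_pos (by norm_num)
      have hlog : Real.log (φ n) = Real.log (φ 2) / Real.log 2 * Real.log n := by
        field_simp
        push_cast at hk
        linarith [hk]
      have hn0 : (0:ℝ) < (n:ℝ) := by exact_mod_cast (by omega : 0 < n)
      rw [Real.rpow_def_of_pos hn0, mul_comm, ← hlog, Real.exp_log (hpos n hn)]
end

section
/- Let α > 0, let p, q > 0 be real numbers, let x > 0, and let f : ℝ≥0 → ℝ be continuous with f(0) = 0 and f(x) > 0. Define P_f(a,b) = 2pq(p^α + (2q)^α)·f((a+b)/2) and P_i(a,b) = pq(p^α + q^α)·(f(a)+f(b)) + q^{α+2}·f(|b−a|). Then the limit of P_f(a,b) − P_i(a,b) as (a,b) → (x,x) equals 2p·q^{α+1}·(2^α − 1)·f(x), which is strictly positive; hence there exists ε > 0 such that P_f(a,b) > P_i(a,b) for all a, b ∈ (x−ε, x+ε). -/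
open Filter Topology

/-- Sufficiency direction of Axiom 1: if α > 0, the merger strictly increases
polarization for a, b close enough to x. -/
theorem axiom1_sufficiency (α p q x : ℝ) (hα : 0 < α) (hp : 0 < p) (hq : 0 < q)
    (hx : 0 < x) (f : ℝ → ℝ)
    (hcont : ContinuousOn f (Set.Ici (0 : ℝ)))
    (h0 : f 0 = 0) (hfx : 0 < f x) :
    Tendsto
      (fun ab : ℝ × ℝ =>
        (2 * p * q * (p ^ α + (2 * q) ^ α) * f ((ab.1 + ab.2) / 2)) -
        (p * q * (p ^ α + q ^ α) * (f ab.1 + f ab.2) +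
          q ^ (α + 2) * f |ab.2 - ab.1|))
      (𝓝[Set.Ici (0 : ℝ) ×ˢ Set.Ici (0 : ℝ)] (x, x))
      (𝓝 (2 * p * q ^ (α + 1) * (2 ^ α - 1) * f x)) ∧
    0 < 2 * p * q ^ (α + 1) * (2 ^ α - 1) * f x ∧
    ∃ ε > 0, ∀ a b : ℝ, a ∈ Set.Ioo (x - ε) (x + ε) → b ∈ Set.Ioo (x - ε) (x + ε) →
      2 * p * q * (p ^ α + (2 * q) ^ α) * f ((a + b) / 2) >
        p * q * (p ^ α + q ^ α) * (f a + f b) + q ^ (α + 2) * f |b - a| := by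
  set S : Set (ℝ × ℝ) := Set.Ici (0 : ℝ) ×ˢ Set.Ici (0 : ℝ)
  set L : ℝ := 2 * p * q ^ (α + 1) * (2 ^ α - 1) * f x with hL
  -- continuity ingredients
  have hmemS : ∀ᶠ ab : ℝ × ℝ in 𝓝[S] (x, x), ab ∈ S := eventually_mem_nhdsWithin
  have hmid : Tendsto (fun ab : ℝ × ℝ => (ab.1 + ab.2) / 2) (𝓝[S] (x, x)) (𝓝[Set.Ici 0] x) := by
    rw [tendsto_nhdsWithin_iff]
    constructor
    · have : Continuous (fun ab : ℝ × ℝ => (ab.1 + ab.2) / 2) := by continuity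
      have := this.tendsto (x, x)
      simp only at this
      have hxx : ((x + x) / 2) = x := by ring
      rw [hxx] at this
      exact this.mono_left nhdsWithin_le_nhds
    · filter_upwards [hmemS] with ab hab
      obtain ⟨h1, h2⟩ := hab
      have : (0:ℝ) ≤ (ab.1 + ab.2) / 2 := by
        have := Set.mem_Ici.mp h1; have := Set.mem_Ici.mp h2
        linarith [Set.mem_Ici.mp h1, Set.mem_Ici.mp h2]
      exact this
  have hfst : Tendsto (fun ab : ℝ × ℝ => ab.1) (𝓝[S] (x, x)) (𝓝[Set.Ici 0] x) := by
    rw [tendsto_nhdsWithin_iff]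
    refine ⟨(continuous_fst.tendsto (x, x)).mono_left nhdsWithin_le_nhds, ?_⟩
    filter_upwards [hmemS] with ab hab using hab.1
  have hsnd : Tendsto (fun ab : ℝ × ℝ => ab.2) (𝓝[S] (x, x)) (𝓝[Set.Ici 0] x) := by
    rw [tendsto_nhdsWithin_iff]
    refine ⟨(continuous_snd.tendsto (x, x)).mono_left nhdsWithin_le_nhds, ?_⟩
    filter_upwards [hmemS] with ab hab using hab.2
  have habs : Tendsto (fun ab : ℝ × ℝ => |ab.2 - ab.1|) (𝓝[S] (x, x)) (𝓝[Set.Ici 0] 0) := by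
    rw [tendsto_nhdsWithin_iff]
    constructor
    · have : Continuous (fun ab : ℝ × ℝ => |ab.2 - ab.1|) := by continuity
      have h := this.tendsto (x, x)
      simp only [sub_self, abs_zero] at h
      exact h.mono_left nhdsWithin_le_nhds
    · exact Eventually.of_forall fun ab => Set.mem_Ici.mpr (abs_nonneg _)
  have hcx : ContinuousWithinAt f (Set.Ici 0) x := hcont x (Set.mem_Ici.mpr hx.le)
  have hc0 : ContinuousWithinAt f (Set.Ici 0) 0 := hcont 0 Set.self_mem_Ici
  have t1 : Tendsto (fun ab : ℝ × ℝ => f ((ab.1 + ab.2) / 2)) (𝓝[S] (x, x)) (𝓝 (f x)) :=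
    hcx.tendsto.comp hmid
  have t2 : Tendsto (fun ab : ℝ × ℝ => f ab.1) (𝓝[S] (x, x)) (𝓝 (f x)) := hcx.tendsto.comp hfst
  have t3 : Tendsto (fun ab : ℝ × ℝ => f ab.2) (𝓝[S] (x, x)) (𝓝 (f x)) := hcx.tendsto.comp hsnd
  have t4 : Tendsto (fun ab : ℝ × ℝ => f |ab.2 - ab.1|) (𝓝[S] (x, x)) (𝓝 (f 0)) :=
    hc0.tendsto.comp habs
  have ht : Tendsto
      (fun ab : ℝ × ℝ =>
        (2 * p * q * (p ^ α + (2 * q) ^ α) * f ((ab.1 + ab.2) / 2)) -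
        (p * q * (p ^ α + q ^ α) * (f ab.1 + f ab.2) +
          q ^ (α + 2) * f |ab.2 - ab.1|)) (𝓝[S] (x, x)) (𝓝 L) := by
    have key : L = 2 * p * q * (p ^ α + (2 * q) ^ α) * f x -
        (p * q * (p ^ α + q ^ α) * (f x + f x) + q ^ (α + 2) * f 0) := by
      rw [h0, hL]
      have h2q : (2 * q) ^ α = 2 ^ α * q ^ α :=
        Real.mul_rpow (by norm_num) hq.le
      have hq1 : q ^ (α + 1) = q ^ α * q := by
        rw [Real.rpow_add hq, Real.rpow_one]
      rw [h2q, hq1]; ring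
    rw [key]
    exact ((tendsto_const_nhds.mul t1).sub
      ((tendsto_const_nhds.mul (t2.add t3)).add (tendsto_const_nhds.mul t4)))
  have hLpos : 0 < L := by
    have h2 : (1:ℝ) < 2 ^ α := Real.one_lt_rpow_iff_of_pos (by norm_num) |>.mpr (Or.inl ⟨by norm_num, hα⟩)
    have hqpos : 0 < q ^ (α + 1) := Real.rpow_pos_of_pos hq _
    have h3 : (0:ℝ) < 2 ^ α - 1 := by linarith
    rw [hL]
    exact mul_pos (mul_pos (mul_pos (mul_pos two_pos hp) hqpos) h3) hfx
  refine ⟨ht, hLpos, ?_⟩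
  have hev : ∀ᶠ ab : ℝ × ℝ in 𝓝[S] (x, x),
      2 * p * q * (p ^ α + (2 * q) ^ α) * f ((ab.1 + ab.2) / 2) >
        p * q * (p ^ α + q ^ α) * (f ab.1 + f ab.2) + q ^ (α + 2) * f |ab.2 - ab.1| := by
    have := ht.eventually (eventually_gt_nhds hLpos)
    filter_upwards [this] with ab hab
    linarith
  rw [Filter.eventually_iff, Metric.mem_nhdsWithin_iff] at hev
  obtain ⟨δ, hδ, hδ'⟩ := hev
  refine ⟨min δ x, lt_min hδ hx, fun a b ha hb => ?_⟩
  have hax : |a - x| < min δ x := abs_sub_lt_iff.mpr ⟨by linarith [ha.2], by linarith [ha.1]⟩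
  have hbx : |b - x| < min δ x := abs_sub_lt_iff.mpr ⟨by linarith [hb.2], by linarith [hb.1]⟩
  have ha0 : 0 ≤ a := by
    have := abs_sub_lt_iff.mp hax
    have := min_le_right δ x
    linarith [ha.1, min_le_right δ x]
  have hb0 : 0 ≤ b := by linarith [hb.1, min_le_right δ x]
  have hmem : ((a, b) : ℝ × ℝ) ∈ S := ⟨Set.mem_Ici.mpr ha0, Set.mem_Ici.mpr hb0⟩
  have hdist : dist ((a, b) : ℝ × ℝ) (x, x) < δ := by
    rw [Prod.dist_eq]
    simp only [Real.dist_eq]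
    exact max_lt (lt_of_lt_of_le hax (min_le_left _ _)) (lt_of_lt_of_le hbx (min_le_left _ _))
  exact hδ' ⟨Metric.mem_ball.mpr hdist, hmem⟩
end

section
/- Let α ≥ 0, let f : ℝ≥0 → ℝ be convex, non-decreasing, with f(0) = 0 and f(d) > 0 for d > 0. Let p > r > 0 and q > 0 be reals, let 0 < x < y with y − x < x, and let Δ ∈ (0, y − x). Then pq(p^α + q^α)·(f(x+Δ) − f(x)) + qr(q^α + r^α)·(f(y−x−Δ) − f(y−x)) > 0. -/
/-- Sufficiency direction of Axiom 2: moving the middle group away from the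
nearer, smaller extreme group strictly increases polarization. -/
theorem axiom2_sufficiency (α : ℝ) (hα : 0 ≤ α) (f : ℝ → ℝ)
    (hconv : ConvexOn ℝ (Set.Ici (0 : ℝ)) f)
    (hmono : MonotoneOn f (Set.Ici (0 : ℝ)))
    (h0 : f 0 = 0) (hfpos : ∀ d : ℝ, 0 < d → 0 < f d)
    (p q r x y Δ : ℝ) (hr : 0 < r) (hrp : r < p) (hq : 0 < q)
    (hx : 0 < x) (hxy : x < y) (hyx : y - x < x)
    (hΔ : Δ ∈ Set.Ioo 0 (y - x)) :
    p * q * (p ^ α + q ^ α) * (f (x + Δ) - f x) +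
      q * r * (q ^ α + r ^ α) * (f (y - x - Δ) - f (y - x)) > 0 := by
  obtain ⟨hΔ0, hΔyx⟩ := hΔ
  have hp : 0 < p := hr.trans hrp
  have ha : (0:ℝ) ≤ y - x - Δ := by linarith
  have hd : (0:ℝ) < x + Δ := by linarith
  -- D2 := f (y-x) - f (y-x-Δ) ≥ 0
  have hD2 : f (y - x - Δ) ≤ f (y - x) :=
    hmono (by simpa using ha) (by simp; linarith) (by linarith)
  -- D1 := f (x+Δ) - f x > 0
  have hD1 : f x < f (x + Δ) := by
    have hs0 : 0 < x / (x + Δ) := div_pos hx hd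
    have hs1 : x / (x + Δ) < 1 := (div_lt_one hd).2 (by linarith)
    have key := hconv.2 (show (0:ℝ) ∈ Set.Ici (0:ℝ) by simp)
      (show x + Δ ∈ Set.Ici (0:ℝ) from le_of_lt hd)
      (show (0:ℝ) ≤ 1 - x / (x + Δ) by linarith) (le_of_lt hs0) (by ring)
    simp only [smul_eq_mul, mul_zero, zero_add, h0] at key
    have e : x / (x + Δ) * (x + Δ) = x := div_mul_cancel₀ _ (ne_of_gt hd)
    rw [e] at key
    have hfd : 0 < f (x + Δ) := hfpos _ hd
    nlinarith
  -- convexity: f (y-x) + f x ≤ f (y-x-Δ) + f (x+Δ)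
  have hslope : f (y - x) + f x ≤ f (y - x - Δ) + f (x + Δ) := by
    have hLpos : (0:ℝ) < (x + Δ) - (y - x - Δ) := by linarith
    set t : ℝ := Δ / ((x + Δ) - (y - x - Δ)) with ht
    have ht0 : 0 ≤ t := le_of_lt (div_pos hΔ0 hLpos)
    have ht1 : t ≤ 1 := (div_le_one hLpos).2 (by linarith)
    have htL : t * ((x + Δ) - (y - x - Δ)) = Δ := div_mul_cancel₀ _ (ne_of_gt hLpos)
    have hmem1 : y - x - Δ ∈ Set.Ici (0:ℝ) := by simpa using ha
    have hmem2 : x + Δ ∈ Set.Ici (0:ℝ) := le_of_lt hd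
    have k1 := hconv.2 hmem1 hmem2 (show (0:ℝ) ≤ 1 - t by linarith) ht0 (by ring)
    have k2 := hconv.2 hmem1 hmem2 ht0 (show (0:ℝ) ≤ 1 - t by linarith) (by ring)
    simp only [smul_eq_mul] at k1 k2
    have e1 : (1 - t) * (y - x - Δ) + t * (x + Δ) = y - x := by nlinarith [htL]
    have e2 : t * (y - x - Δ) + (1 - t) * (x + Δ) = x := by nlinarith [htL]
    rw [e1] at k1; rw [e2] at k2
    linarith
  -- coefficients
  have hpq : q * r * (q ^ α + r ^ α) < p * q * (p ^ α + q ^ α) := by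
    have h1 : r ^ α ≤ p ^ α := Real.rpow_le_rpow (le_of_lt hr) (le_of_lt hrp) hα
    have h2 : (0:ℝ) < q ^ α := Real.rpow_pos_of_pos hq α
    have h3 : (0:ℝ) < r ^ α := Real.rpow_pos_of_pos hr α
    have inner : r * (q ^ α + r ^ α) < p * (p ^ α + q ^ α) := by nlinarith
    calc q * r * (q ^ α + r ^ α) = q * (r * (q ^ α + r ^ α)) := by ring
      _ < q * (p * (p ^ α + q ^ α)) := by exact mul_lt_mul_of_pos_left inner hq
      _ = p * q * (p ^ α + q ^ α) := by ring
  have hBpos : 0 < q * r * (q ^ α + r ^ α) := by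
    have h2 : (0:ℝ) < q ^ α := Real.rpow_pos_of_pos hq α
    have h3 : (0:ℝ) < r ^ α := Real.rpow_pos_of_pos hr α
    positivity
  nlinarith [mul_pos (sub_pos.2 hpq) (sub_pos.2 hD1),
    mul_le_mul_of_nonneg_left (show f (y - x) - f (y - x - Δ) ≤ f (x + Δ) - f x by linarith) hBpos.le]
end

section
/- Let f : ℝ≥0 → ℝ be continuous. Suppose that for all real p > r > 0, q > 0, all 0 < x < y with y − x < x, and all Δ ∈ (0, y − x), one has pq(p^α + q^α)(f(x+Δ) − f(x)) + qr(q^α + r^α)(f(y−x−Δ) − f(y−x)) > 0 (for some fixed α ≥ 0). Then f is convex on ℝ≥0. -/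
/-!
Take populations `(p, q, r) = (t, 1, 1)` at incomes `x = a` and `y = a + b`, and let `t → 1⁺`
(the limit `p → r`): the Axiom 2 inequality degenerates to
`f a + f b ≤ f (a + Δ) + f (b - Δ)` for `0 < Δ < b < a`, i.e. spreading two positive points
apart at constant sum does not decrease `f a + f b`. Applied to the pair `m ± ε` spread out to
`u, v` and letting `ε → 0⁺` gives midpoint convexity on `(0, ∞)`. A continuous midpoint convex
function is convex: subtracting the chord, the rightmost maximiser on `[x, y]` of what is left,
if it were positive, would lie strictly inside and violate the midpoint inequality there.
-/

open Set Filter Topology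

def MidpointConvexOn (s : Set ℝ) (f : ℝ → ℝ) : Prop :=
  ∀ x ∈ s, ∀ y ∈ s, f ((x + y) / 2) ≤ (f x + f y) / 2

namespace MidpointConvexOn

variable {s : Set ℝ} {f : ℝ → ℝ}

theorem mono {t : Set ℝ} (hf : MidpointConvexOn s f) (hts : t ⊆ s) : MidpointConvexOn t f :=
  fun x hx y hy => hf x (hts hx) y (hts hy)

theorem sub_affine (hf : MidpointConvexOn s f) (c d : ℝ) :
    MidpointConvexOn s fun t => f t - (c * t + d) := fun x hx y hy => by
  linarith [hf x hx y hy]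

theorem le_max_of_mem_Icc {a b t : ℝ} (hf : MidpointConvexOn (Ioo a b) f)
    (hc : ContinuousOn f (Icc a b)) (ht : t ∈ Icc a b) : f t ≤ max (f a) (f b) := by
  by_contra! hlt
  obtain ⟨w, hw_mem, hw⟩ := isCompact_Icc.exists_isMaxOn ⟨t, ht⟩ hc
  have hS : IsCompact (Icc a b ∩ f ⁻¹' {f w}) :=
    isCompact_Icc.of_isClosed_subset
      (hc.preimage_isClosed_of_isClosed isClosed_Icc isClosed_singleton) inter_subset_left
  obtain ⟨m, ⟨hm, hfm : f m = f w⟩, hm_greatest⟩ := hS.exists_isGreatest ⟨w, hw_mem, rfl⟩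
  have hmax : max (f a) (f b) < f m := hfm ▸ hlt.trans_le (hw ht)
  have ham : a < m := hm.1.lt_of_ne (by rintro rfl; simp at hmax)
  have hmb : m < b := hm.2.lt_of_ne (by rintro rfl; simp at hmax)
  obtain ⟨δ, hδ, hδa, hδb⟩ : ∃ δ, 0 < δ ∧ δ < m - a ∧ δ < b - m :=
    ⟨min (m - a) (b - m) / 2, half_pos (lt_min (sub_pos.2 ham) (sub_pos.2 hmb)),
      by linarith [min_le_left (m - a) (b - m)], by linarith [min_le_right (m - a) (b - m)]⟩
  have hmem_left : m - δ ∈ Icc a b := ⟨by linarith, by linarith⟩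
  have hmem_right : m + δ ∈ Icc a b := ⟨by linarith, by linarith⟩
  have hleft : f (m - δ) ≤ f m := hfm ▸ hw hmem_left
  have hright : f (m + δ) < f m := by
    refine (hfm ▸ hw hmem_right : f (m + δ) ≤ f m).lt_of_ne fun h => ?_
    have := hm_greatest ⟨hmem_right, h.trans hfm⟩
    linarith
  have hmid := hf (m - δ) ⟨by linarith, by linarith⟩ (m + δ) ⟨by linarith, by linarith⟩
  rw [show (m - δ + (m + δ)) / 2 = m by ring] at hmid
  linarith

theorem convexOn (hs : Convex ℝ s) (hf : MidpointConvexOn (interior s) f)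
    (hc : ContinuousOn f s) : ConvexOn ℝ s f := by
  refine LinearOrder.convexOn_of_lt hs fun x hx y hy hxy a b ha hb hab => ?_
  have hIcc : Icc x y ⊆ s := hs.ordConnected.out hx hy
  have hIoo : Ioo x y ⊆ interior s := interior_Icc (a := x) (b := y) ▸ interior_mono hIcc
  set c := (f y - f x) / (y - x)
  have hz : a • x + b • y ∈ Icc x y := segment_eq_Icc hxy.le ▸ ⟨a, b, ha.le, hb.le, hab, rfl⟩
  have hchord := ((hf.mono hIoo).sub_affine c (f x - c * x)).le_max_of_mem_Icc
    (by have := hc.mono hIcc; fun_prop) hz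
  have hcy : c * y + (f x - c * x) = f y := by
    simp only [c]; field_simp [(sub_pos.2 hxy).ne']; ring
  have hcz : c * (a * x + b * y) + (f x - c * x) = a * f x + b * f y := by
    rw [← hcy]; linear_combination (c * x - f x) * hab
  simp only [sub_self, hcy, add_sub_cancel, max_self, smul_eq_mul] at hchord ⊢
  linarith

end MidpointConvexOn

theorem midpointConvexOn_Ioi_of_add_le_add_spread {f : ℝ → ℝ} (hc : ContinuousOn f (Ioi 0))
    (hspread : ∀ a b Δ : ℝ, 0 < b → b < a → 0 < Δ → Δ < b →
      f a + f b ≤ f (a + Δ) + f (b - Δ)) :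
    MidpointConvexOn (Ioi 0) f := by
  have key : ∀ u v : ℝ, 0 < u → u < v → f ((u + v) / 2) ≤ (f u + f v) / 2 := by
    intro u v hu huv
    set m := (u + v) / 2 with hm_def
    have hm : 0 < m := by linarith
    have hspread_m : ∀ ε ∈ Ioo 0 ((v - u) / 2), f (m + ε) + f (m - ε) ≤ f v + f u := by
      rintro ε ⟨hε, hεh⟩
      have h := hspread (m + ε) (m - ε) ((v - u) / 2 - ε) (by linarith) (by linarith [hm_def])
        (by linarith) (by linarith [hm_def])
      rwa [show m + ε + ((v - u) / 2 - ε) = v by ring,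
        show m - ε - ((v - u) / 2 - ε) = u by ring] at h
    have hfm : ContinuousAt f m := hc.continuousAt (Ioi_mem_nhds hm)
    have hlim : Tendsto (fun ε => f (m + ε) + f (m - ε)) (𝓝[>] 0) (𝓝 (f m + f m)) := by
      have hplus : Tendsto (fun ε : ℝ => m + ε) (𝓝 0) (𝓝 m) := by
        simpa using tendsto_const_nhds.add (tendsto_id (x := 𝓝 (0 : ℝ)))
      have hminus : Tendsto (fun ε : ℝ => m - ε) (𝓝 0) (𝓝 m) := by
        simpa using tendsto_const_nhds.sub (tendsto_id (x := 𝓝 (0 : ℝ)))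
      exact ((hfm.tendsto.comp hplus).add (hfm.tendsto.comp hminus)).mono_left nhdsWithin_le_nhds
    have := le_of_tendsto hlim
      (eventually_of_mem (Ioo_mem_nhdsGT (by linarith)) hspread_m)
    linarith
  intro u hu v hv
  rcases lt_trichotomy u v with huv | rfl | hvu
  · exact key u v hu huv
  · simp
  · rw [add_comm u, add_comm (f u)]
    exact key v u hv hvu

theorem add_nonneg_of_weighted_add_pos {α A B : ℝ}
    (h : ∀ t : ℝ, 1 < t → 0 < t * (t ^ α + 1) * A + 2 * B) : 0 ≤ A + B := by
  have hφ : ContinuousAt (fun t : ℝ => t * (t ^ α + 1) * A + 2 * B) 1 := by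
    have := Real.continuousAt_rpow_const 1 α (Or.inl one_ne_zero)
    fun_prop
  have h1 : 0 ≤ 1 * ((1 : ℝ) ^ α + 1) * A + 2 * B :=
    ge_of_tendsto (hφ.tendsto.mono_left (nhdsWithin_le_nhds (s := Ioi 1)))
      (eventually_nhdsWithin_of_forall fun t ht => (h t ht).le)
  rw [Real.one_rpow] at h1
  linarith

theorem axiom2_necessity_general (α : ℝ) (f : ℝ → ℝ)
    (hcont : ContinuousOn f (Set.Ici (0 : ℝ)))
    (hax2 : ∀ p q r x y Δ : ℝ, 0 < r → r < p → 0 < q →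
      0 < x → x < y → y - x < x → Δ ∈ Set.Ioo 0 (y - x) →
      p * q * (p ^ α + q ^ α) * (f (x + Δ) - f x) +
        q * r * (q ^ α + r ^ α) * (f (y - x - Δ) - f (y - x)) > 0) :
    ConvexOn ℝ (Set.Ici (0 : ℝ)) f := by
  have hspread : ∀ a b Δ : ℝ, 0 < b → b < a → 0 < Δ → Δ < b →
      f a + f b ≤ f (a + Δ) + f (b - Δ) := by
    intro a b Δ hb hba hΔ hΔb
    have hpos : ∀ t : ℝ, 1 < t →
        0 < t * (t ^ α + 1) * (f (a + Δ) - f a) + 2 * (f (b - Δ) - f b) := by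
      intro t ht
      have h := hax2 t 1 1 a (a + b) Δ one_pos ht one_pos (hb.trans hba) (by linarith)
        (by linarith) ⟨hΔ, by linarith⟩
      simp only [Real.one_rpow, add_sub_cancel_left] at h
      linarith
    linarith [add_nonneg_of_weighted_add_pos hpos]
  refine MidpointConvexOn.convexOn (convex_Ici 0) ?_ hcont
  rw [interior_Ici]
  exact midpointConvexOn_Ioi_of_add_le_add_spread (hcont.mono Ioi_subset_Ici_self) hspread

/-- Necessity direction of Axiom 2: the Axiom 2 inequality for all admissible
configurations forces the alienation function to be convex. -/
theorem axiom2_necessity (α : ℝ) (hα : 0 ≤ α) (f : ℝ → ℝ)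
    (hcont : ContinuousOn f (Set.Ici (0 : ℝ)))
    (hax2 : ∀ p q r x y Δ : ℝ, 0 < r → r < p → 0 < q →
      0 < x → x < y → y - x < x → Δ ∈ Set.Ioo 0 (y - x) →
      p * q * (p ^ α + q ^ α) * (f (x + Δ) - f x) +
        q * r * (q ^ α + r ^ α) * (f (y - x - Δ) - f (y - x)) > 0) :
    ConvexOn ℝ (Set.Ici (0 : ℝ)) f :=
  axiom2_necessity_general α f hcont hax2
end

section
/- Fix α ≥ 0, a non-decreasing function f : ℝ≥0 → ℝ with f(0) = 0 and f(d) > 0 for d > 0, real p > 0, q ≥ 2 (with q − 2 ≥ 0), and d > 0. Define P_i = 2(pq(p^α + q^α)f(d) + p^{α+2}f(2d)) and P_f = 2((p+1)(q−2)((p+1)^α + (q−2)^α)f(d) + (p+1)^{α+2}f(2d)). Then P_f > P_i if and only if f(2d)/f(d) > (p^{α+1}q + pq^{α+1} − (p+1)^{α+1}(q−2) − (p+1)(q−2)^{α+1}) / ((p+1)^{α+2} − p^{α+2}). -/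
lemma rpow_add_one' (x α : ℝ) (hx : 0 ≤ x) (hα : 0 ≤ α) :
    x ^ (α + 1) = x ^ α * x := by
  rcases eq_or_lt_of_le hx with h | h
  · rw [← h, Real.zero_rpow (by linarith), mul_zero]
  · rw [Real.rpow_add_one h.ne']

lemma rpow_add_two' (x α : ℝ) (hx : 0 ≤ x) (hα : 0 ≤ α) :
    x ^ (α + 2) = x ^ α * x * x := by
  have : α + 2 = (α + 1) + 1 := by ring
  rw [this, rpow_add_one' x (α + 1) hx (by linarith), rpow_add_one' x α hx hα]

/-- Exact algebraic characterization of Axiom 3 (Proposition 4.5): the transfer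
strictly increases polarization iff f(2d)/f(d) exceeds the critical threshold. -/
theorem axiom3_characterization (α : ℝ) (hα : 0 ≤ α) (f : ℝ → ℝ)
    (hmono : MonotoneOn f (Set.Ici (0 : ℝ)))
    (h0 : f 0 = 0) (hfpos : ∀ d : ℝ, 0 < d → 0 < f d)
    (p q d : ℝ) (hp : 0 < p) (hq : 2 ≤ q) (hd : 0 < d) :
    2 * ((p + 1) * (q - 2) * ((p + 1) ^ α + (q - 2) ^ α) * f d +
        (p + 1) ^ (α + 2) * f (2 * d)) >
      2 * (p * q * (p ^ α + q ^ α) * f d + p ^ (α + 2) * f (2 * d)) ↔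
    f (2 * d) / f d >
      (p ^ (α + 1) * q + p * q ^ (α + 1) - (p + 1) ^ (α + 1) * (q - 2) -
          (p + 1) * (q - 2) ^ (α + 1)) /
        ((p + 1) ^ (α + 2) - p ^ (α + 2)) := by
  have hfd : 0 < f d := hfpos d hd
  have hD : 0 < (p + 1) ^ (α + 2) - p ^ (α + 2) := by
    have := Real.rpow_lt_rpow hp.le (by linarith : p < p + 1) (by linarith : (0:ℝ) < α + 2)
    linarith
  rw [rpow_add_two' p α hp.le hα, rpow_add_two' (p+1) α (by linarith) hα,
    rpow_add_one' p α hp.le hα, rpow_add_one' q α (by linarith) hα,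
    rpow_add_one' (p+1) α (by linarith) hα, rpow_add_one' (q-2) α (by linarith) hα] at *
  rw [gt_iff_lt, gt_iff_lt, div_lt_div_iff₀ hD hfd]
  constructor <;> intro h <;> nlinarith [h]
end

section
/- Let f : ℝ≥0 → ℝ be non-decreasing with f(0) = 0 and f(d) > 0 for all d > 0. Then for all natural numbers p ≥ 1, q ≥ 2 and all real d > 0: 2((p+1)(q−2)((p+1) + (q−2))f(d) + (p+1)³f(2d)) > 2(pq(p + q)f(d) + p³f(2d)). -/
/-- The index induced by θ(π,d) = π·f(d) (α = 1) satisfies Axiom 3. -/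
theorem axiom3_alpha_one (f : ℝ → ℝ)
    (hmono : MonotoneOn f (Set.Ici (0 : ℝ)))
    (h0 : f 0 = 0) (hfpos : ∀ d : ℝ, 0 < d → 0 < f d)
    (p q : ℕ) (hp : 1 ≤ p) (hq : 2 ≤ q) (d : ℝ) (hd : 0 < d) :
    2 * (((p : ℝ) + 1) * ((q : ℝ) - 2) * (((p : ℝ) + 1) + ((q : ℝ) - 2)) * f d +
        ((p : ℝ) + 1) ^ 3 * f (2 * d)) >
      2 * ((p : ℝ) * q * ((p : ℝ) + q) * f d + (p : ℝ) ^ 3 * f (2 * d)) := by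
  have hp' : (1:ℝ) ≤ (p:ℝ) := by exact_mod_cast hp
  have hq' : (2:ℝ) ≤ (q:ℝ) := by exact_mod_cast hq
  have hfd : 0 < f d := hfpos d hd
  have hle : f d ≤ f (2*d) :=
    hmono (Set.mem_Ici.mpr hd.le) (Set.mem_Ici.mpr (by linarith)) (by linarith)
  nlinarith [sq_nonneg ((p:ℝ) - (q:ℝ)), sq_nonneg (2*((p:ℝ) - (q:ℝ)) + 3),
    mul_nonneg (by nlinarith : (0:ℝ) ≤ 3*(p:ℝ)^2 + 3*(p:ℝ) + 1) (sub_nonneg.mpr hle),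
    mul_pos (by nlinarith [sq_nonneg (2*((p:ℝ) - (q:ℝ)) + 3)] :
      (0:ℝ) < ((p:ℝ)-(q:ℝ))^2 + 3*((p:ℝ)-(q:ℝ)) + 3) hfd]
end

section
/- For all natural numbers p ≥ 1 and q ≥ 2, g(p,q,1) := (p²q + pq² − (p+1)²(q−2) − (p+1)(q−2)²)/((p+1)³ − p³) satisfies g(p,q,1) < 1, and moreover the supremum of g(p,q,1) over p ≥ 1, q ≥ 2 equals 1 (it is approached but never attained). -/
/-- g(p,q,1) < 1 for all admissible group sizes, and the supremum of these
values is exactly 1. -/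
theorem g_sup_one :
    (∀ p q : ℕ, 1 ≤ p → 2 ≤ q →
      ((p : ℝ) ^ 2 * q + p * q ^ 2 - (p + 1) ^ 2 * (q - 2) -
          (p + 1) * (q - 2) ^ 2) / (((p : ℝ) + 1) ^ 3 - p ^ 3) < 1) ∧
    IsLUB {x : ℝ | ∃ p q : ℕ, 1 ≤ p ∧ 2 ≤ q ∧
      x = ((p : ℝ) ^ 2 * q + p * q ^ 2 - (p + 1) ^ 2 * (q - 2) -
            (p + 1) * (q - 2) ^ 2) / (((p : ℝ) + 1) ^ 3 - p ^ 3)} 1 := by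
  have key : ∀ p q : ℕ, 1 ≤ p → 2 ≤ q →
      ((p : ℝ) ^ 2 * q + p * q ^ 2 - (p + 1) ^ 2 * (q - 2) -
          (p + 1) * (q - 2) ^ 2) / (((p : ℝ) + 1) ^ 3 - p ^ 3) < 1 := by
    intro p q hp hq
    have hp' : (1 : ℝ) ≤ p := by exact_mod_cast hp
    have hD : (0 : ℝ) < ((p : ℝ) + 1) ^ 3 - p ^ 3 := by nlinarith
    rw [div_lt_one hD]
    nlinarith [sq_nonneg ((p : ℝ) - q + 3 / 2)]
  refine ⟨key, ?_, ?_⟩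
  · rintro x ⟨p, q, hp, hq, rfl⟩
    exact le_of_lt (key p q hp hq)
  · intro b hb
    -- sequence a n : value at p = n+1, q = n+2
    have hmem : ∀ n : ℕ, (1 : ℝ) - 1 / (3 * ((n : ℝ) + 1) ^ 2 + 3 * ((n : ℝ) + 1) + 1) ≤ b := by
      intro n
      have h := hb ⟨n + 1, n + 2, by omega, by omega, rfl⟩
      have hD : (0 : ℝ) < 3 * ((n : ℝ) + 1) ^ 2 + 3 * ((n : ℝ) + 1) + 1 := by positivity
      have heq : ((((n : ℕ) + 1 : ℕ) : ℝ) ^ 2 * ((n : ℕ) + 2 : ℕ) + (((n : ℕ) + 1 : ℕ) : ℝ) * (((n : ℕ) + 2 : ℕ) : ℝ) ^ 2 - ((((n : ℕ) + 1 : ℕ) : ℝ) + 1) ^ 2 * ((((n : ℕ) + 2 : ℕ) : ℝ) - 2) -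
            ((((n : ℕ) + 1 : ℕ) : ℝ) + 1) * ((((n : ℕ) + 2 : ℕ) : ℝ) - 2) ^ 2) / (((((n : ℕ) + 1 : ℕ) : ℝ) + 1) ^ 3 - (((n : ℕ) + 1 : ℕ) : ℝ) ^ 3)
          = (1 : ℝ) - 1 / (3 * ((n : ℝ) + 1) ^ 2 + 3 * ((n : ℝ) + 1) + 1) := by
        have hDne : ((n : ℝ) + 1 + 1) ^ 3 - ((n : ℝ) + 1) ^ 3 ≠ 0 := by
          nlinarith [Nat.cast_nonneg (α := ℝ) n]
        push_cast
        rw [div_eq_iff hDne]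
        field_simp
        ring
      rw [heq] at h
      exact h
    have htend : Filter.Tendsto
        (fun n : ℕ => (1 : ℝ) - 1 / (3 * ((n : ℝ) + 1) ^ 2 + 3 * ((n : ℝ) + 1) + 1))
        Filter.atTop (nhds 1) := by
      have h0 : Filter.Tendsto
          (fun n : ℕ => 1 / (3 * ((n : ℝ) + 1) ^ 2 + 3 * ((n : ℝ) + 1) + 1))
          Filter.atTop (nhds 0) := by
        simp only [one_div]
        apply Filter.Tendsto.inv_tendsto_atTop
        apply Filter.tendsto_atTop_mono (f := fun n : ℕ => (n : ℝ))
        · intro n; nlinarith [Nat.cast_nonneg (α := ℝ) n]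
        · exact tendsto_natCast_atTop_atTop
      have := Filter.Tendsto.sub (tendsto_const_nhds (x := (1 : ℝ))) h0
      simpa using this
    exact le_of_tendsto htend (Filter.Eventually.of_forall hmem)
end

section
/- Let f : ℝ≥0 → ℝ be convex, non-decreasing, f(0) = 0, f(d) > 0 for d > 0, and let α ∈ (0, 1]. Suppose g(p,q,α) < 2 for all naturals p ≥ 1, q ≥ 2, where g(p,q,α) = (p^{α+1}q + pq^{α+1} − (p+1)^{α+1}(q−2) − (p+1)(q−2)^{α+1})/((p+1)^{α+2} − p^{α+2}). Then for all naturals p ≥ 1, q ≥ 2 and all real d > 0, the Axiom 3 transfer strictly increases polarization: (p+1)(q−2)((p+1)^α + (q−2)^α)f(d) + (p+1)^{α+2}f(2d) > pq(p^α + q^α)f(d) + p^{α+2}f(2d). -/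
/-- If the Axiom 3 threshold g(p,q,α) stays below 2, any convex alienation
function yields an index satisfying Axiom 3. -/
theorem axiom3_of_g_lt_two (f : ℝ → ℝ)
    (hconv : ConvexOn ℝ (Set.Ici (0 : ℝ)) f)
    (hmono : MonotoneOn f (Set.Ici (0 : ℝ)))
    (h0 : f 0 = 0) (hfpos : ∀ d : ℝ, 0 < d → 0 < f d)
    (α : ℝ) (hα : 0 < α) (hα1 : α ≤ 1)
    (hg : ∀ p q : ℕ, 1 ≤ p → 2 ≤ q →
      ((p : ℝ) ^ (α + 1) * q + p * (q : ℝ) ^ (α + 1) -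
          ((p : ℝ) + 1) ^ (α + 1) * ((q : ℝ) - 2) -
          ((p : ℝ) + 1) * ((q : ℝ) - 2) ^ (α + 1)) /
        (((p : ℝ) + 1) ^ (α + 2) - (p : ℝ) ^ (α + 2)) < 2) :
    ∀ p q : ℕ, 1 ≤ p → 2 ≤ q → ∀ d : ℝ, 0 < d →
      ((p : ℝ) + 1) * ((q : ℝ) - 2) * (((p : ℝ) + 1) ^ α + ((q : ℝ) - 2) ^ α) * f d +
          ((p : ℝ) + 1) ^ (α + 2) * f (2 * d) >
        (p : ℝ) * q * ((p : ℝ) ^ α + (q : ℝ) ^ α) * f d +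
          (p : ℝ) ^ (α + 2) * f (2 * d) := by
  intro p q hp hq d hd
  have hP : (1 : ℝ) ≤ (p : ℝ) := by exact_mod_cast hp
  have hQ : (2 : ℝ) ≤ (q : ℝ) := by exact_mod_cast hq
  set P : ℝ := (p : ℝ) with hPdef
  set Q : ℝ := (q : ℝ) with hQdef
  have hP0 : 0 < P := lt_of_lt_of_le one_pos hP
  have hP10 : 0 < P + 1 := by linarith
  have hQ2 : 0 ≤ Q - 2 := by linarith
  -- f(2d) ≥ 2 f(d)
  have hf2 : 2 * f d ≤ f (2 * d) := by
    have h := hconv.2 (Set.mem_Ici.mpr le_rfl) (Set.mem_Ici.mpr (by linarith : (0:ℝ) ≤ 2 * d))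
      (by norm_num : (0:ℝ) ≤ 1/2) (by norm_num : (0:ℝ) ≤ 1/2) (by norm_num : (1:ℝ)/2 + 1/2 = 1)
    simp only [smul_eq_mul] at h
    have : (1:ℝ)/2 * 0 + 1/2 * (2 * d) = d := by ring
    rw [this, h0] at h
    linarith
  have hfd : 0 < f d := hfpos d hd
  -- abbreviations
  have ha : P ^ (α + 1) = P ^ α * P := Real.rpow_add_one hP0.ne' α
  have hb : Q ^ (α + 1) = Q ^ α * Q := Real.rpow_add_one (by positivity) α
  have hc : (P + 1) ^ (α + 1) = (P + 1) ^ α * (P + 1) := Real.rpow_add_one hP10.ne' α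
  have he : (Q - 2) ^ (α + 1) = (Q - 2) ^ α * (Q - 2) := by
    rcases eq_or_lt_of_le hQ2 with h | h
    · rw [← h, Real.zero_rpow (by linarith), mul_zero]
    · exact Real.rpow_add_one (ne_of_gt h) α
  have ha2 : P ^ (α + 2) = P ^ α * P * P := by
    rw [show α + 2 = α + 1 + 1 by ring, Real.rpow_add_one hP0.ne', ha]
  have hc2 : (P + 1) ^ (α + 2) = (P + 1) ^ α * (P + 1) * (P + 1) := by
    rw [show α + 2 = α + 1 + 1 by ring, Real.rpow_add_one hP10.ne', hc]
  have hD : P ^ (α + 2) < (P + 1) ^ (α + 2) :=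
    Real.rpow_lt_rpow hP0.le (by linarith) (by linarith)
  have hgpq := hg p q hp hq
  rw [div_lt_iff₀ (by linarith)] at hgpq
  rw [ha, hb, hc, he, ha2, hc2] at hgpq
  rw [ha2, hc2] at hD ⊢
  nlinarith [mul_lt_mul_of_pos_right hgpq hfd,
    mul_le_mul_of_nonneg_left hf2 (by linarith : (0:ℝ) ≤ (P + 1) ^ α * (P + 1) * (P + 1) - P ^ α * P * P)]
end
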